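/- arXiv:1912.01537 — 2 statements merged into one kernel-verified Lean document; each statement's English description precedes it below -/
import Mathlib

section
/- Let n > 0, α > 0, and let L : (0,∞) → ℝ be non-decreasing. Suppose x : [t₀,∞) → (0,∞) is a C¹ solution of x'(t) = x(t)·(L(x(t)) − n/(α t)) on [t₀,∞) with t₀ > 0. If x'(t₂) > 0 for some t₂ ≥ t₀, then x'(t) > 0 for all t ≥ t₂. -/
open Set

/-!
If `x` ever came back down to the level `x t₂` after time `t₂`, then at that moment
`L (x t) ≥ L (x t₂)` while `n / (α t) ≤ n / (α t₂)`, so the right-hand side of the equation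
would be at least as positive as at `t₂`: the solution can only cross the level `x t₂` upwards.
Hence `x t ≥ x t₂` for all `t ≥ t₂`, and the same comparison gives `x' t > 0`.
-/

theorem le_of_deriv_pos_of_eq {f f' : ℝ → ℝ} {a : ℝ}
    (hf : ∀ t, a ≤ t → HasDerivAt f (f' t) t)
    (hlevel : ∀ t, a ≤ t → f t = f a → 0 < f' t) :
    ∀ t, a ≤ t → f a ≤ f t := by
  intro t hat
  refine image_le_of_deriv_right_lt_deriv_boundary' (f' := fun _ => 0) (b := t)
    continuousOn_const (fun _ _ => hasDerivWithinAt_const _ _ _) le_rfl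
    (fun s hs => (hf s hs.1).continuousAt.continuousWithinAt)
    (fun s hs => (hf s hs.1).hasDerivWithinAt) (fun s hs heq => hlevel s hs.1 heq.symm)
    ⟨hat, le_rfl⟩

theorem mul_sub_div_pos_of_le {L : ℝ → ℝ} (hL : MonotoneOn L (Ioi 0)) {n α s t u v : ℝ}
    (hn : 0 ≤ n) (hα : 0 < α) (hs : 0 < s) (hst : s ≤ t) (hu : 0 < u) (huv : u ≤ v)
    (h : 0 < u * (L u - n / (α * s))) :
    0 < v * (L v - n / (α * t)) := by
  have hLs : 0 < L u - n / (α * s) := pos_of_mul_pos_right h hu.le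
  have hdiv : n / (α * t) ≤ n / (α * s) :=
    div_le_div_of_nonneg_left hn (by positivity) (by gcongr)
  have hLuv : L u ≤ L v := hL hu (hu.trans_le huv) huv
  exact mul_pos (hu.trans_le huv) (by linarith)

theorem stmt5_general (n α t₀ t₂ : ℝ) (L : ℝ → ℝ) (x x' : ℝ → ℝ)
    (hn : 0 < n) (hα : 0 < α) (ht₀ : 0 < t₀)
    (hL : ∀ u v : ℝ, 0 < u → u ≤ v → L u ≤ L v)
    (hxpos : ∀ t : ℝ, t₀ ≤ t → 0 < x t)
    (hderiv : ∀ t : ℝ, t₀ ≤ t → HasDerivAt x (x' t) t)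
    (hode : ∀ t : ℝ, t₀ ≤ t → x' t = x t * (L (x t) - n / (α * t)))
    (ht₂ : t₀ ≤ t₂)
    (hpos₂ : 0 < x' t₂) :
    ∀ t : ℝ, t₂ ≤ t → 0 < x' t := by
  have hLmono : MonotoneOn L (Ioi 0) := fun u hu v _ huv => hL u v hu huv
  have hrhs : ∀ t, t₂ ≤ t → x t₂ ≤ x t → 0 < x' t := by
    intro t ht hxt
    rw [hode t (ht₂.trans ht)]
    exact mul_sub_div_pos_of_le hLmono hn.le hα (ht₀.trans_le ht₂) ht (hxpos t₂ ht₂) hxt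
      (hode t₂ ht₂ ▸ hpos₂)
  have hstay : ∀ t, t₂ ≤ t → x t₂ ≤ x t :=
    le_of_deriv_pos_of_eq (fun t ht => hderiv t (ht₂.trans ht))
      (fun t ht heq => hrhs t ht heq.ge)
  exact fun t ht => hrhs t ht (hstay t ht)

/-- for a positive C¹ solution `x` of `x' = x (L(x) − n/(α t))` on `[t₀,∞)`
with `L` non-decreasing on `(0,∞)`, if `x'(t₂) > 0` for some `t₂ ≥ t₀` then `x'(t) > 0`
for all `t ≥ t₂`. -/
theorem stmt5 (n α t₀ t₂ : ℝ) (L : ℝ → ℝ) (x x' : ℝ → ℝ)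
    (hn : 0 < n) (hα : 0 < α) (ht₀ : 0 < t₀)
    (hL : ∀ u v : ℝ, 0 < u → u ≤ v → L u ≤ L v)
    (hxpos : ∀ t : ℝ, t₀ ≤ t → 0 < x t)
    (hderiv : ∀ t : ℝ, t₀ ≤ t → HasDerivAt x (x' t) t)
    (hcont : ContinuousOn x' (Ici t₀))
    (hode : ∀ t : ℝ, t₀ ≤ t → x' t = x t * (L (x t) - n / (α * t)))
    (ht₂ : t₀ ≤ t₂)
    (hpos₂ : 0 < x' t₂) :
    ∀ t : ℝ, t₂ ≤ t → 0 < x' t :=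
  stmt5_general n α t₀ t₂ L x x' hn hα ht₀ hL hxpos hderiv hode ht₂ hpos₂
end

section
/- Let n ≥ 1, α > 0, t₀ > 0, κ > 0, and let f : (0,∞) → (0,∞) be locally Lipschitz and non-decreasing. Suppose z : [t₀,∞) → (0,∞) is continuous and satisfies z(t) ≥ κ t^{−n/α} + κ ∫_{t₀}^t (t/s)^{−n/α} f(z(s)) ds for all t ≥ t₀, and suppose every solution of x' = f(x) − (n/(α t)) x with positive initial data at positive initial time blows up in finite time. Then no such globally defined z exists; i.e., the integral inequality has no solution finite on all of [t₀,∞). -/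
/-!
With `p = n / α`, the inequality says `T z ≤ z` for the monotone operator
`T = volterraMap t₀ κ p f`, `T u (t) = κ t^{-p} (1 + ∫_{t₀}^t s^p f (u s) ds)`. The iterates
`T^[k] z` therefore decrease and stay above `κ t^{-p} > 0`; by dominated convergence their limit
`x` is a continuous positive fixed point of `T`. Differentiating
`t^p x t = κ (1 + ∫_{t₀}^t s^p f (x s) ds)` gives `x' = κ f x - (p / t) x` on `(t₀, ∞)`, so
`τ ↦ x (τ / κ)` is a global positive solution of `x' = f x - (p / τ) x`, which the blow-up
hypothesis rules out.
-/

open Set Real MeasureTheory intervalIntegral Filter Topology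

noncomputable def volterraMap (t₀ κ p : ℝ) (f u : ℝ → ℝ) (t : ℝ) : ℝ :=
  κ * t ^ (-p) * (1 + ∫ s in t₀..t, s ^ p * f (u s))

variable {t₀ κ p t : ℝ} {f g u v x z : ℝ → ℝ}

theorem volterraMap_eq_add_integral (ht₀ : 0 < t₀) (ht : t₀ ≤ t) :
    volterraMap t₀ κ p f u t = κ * t ^ (-p) + κ * ∫ s in t₀..t, (t / s) ^ (-p) * f (u s) := by
  have hrpow : ∀ s ∈ uIcc t₀ t, (t / s) ^ (-p) * f (u s) = t ^ (-p) * (s ^ p * f (u s)) := by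
    intro s hs
    rw [uIcc_of_le ht] at hs
    have hs0 : 0 ≤ s := ht₀.le.trans hs.1
    rw [div_rpow (ht₀.le.trans ht) hs0, rpow_neg hs0, div_inv_eq_mul, mul_assoc]
  rw [integral_congr hrpow, intervalIntegral.integral_const_mul, volterraMap]
  ring

theorem continuousOn_rpow_mul_comp (ht₀ : 0 < t₀) (hf : ContinuousOn f (Ioi 0))
    (hu : ContinuousOn u (Ici t₀)) (hu_pos : MapsTo u (Ici t₀) (Ioi 0)) :
    ContinuousOn (fun s => s ^ p * f (u s)) (Ici t₀) :=
  (continuousOn_id.rpow_const fun _ hs => Or.inl (ht₀.trans_le hs).ne').mul (hf.comp hu hu_pos)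

theorem intervalIntegrable_rpow_mul_comp (ht₀ : 0 < t₀) (hf : ContinuousOn f (Ioi 0))
    (hu : ContinuousOn u (Ici t₀)) (hu_pos : MapsTo u (Ici t₀) (Ioi 0)) (ht : t₀ ≤ t) :
    IntervalIntegrable (fun s => s ^ p * f (u s)) volume t₀ t :=
  ((continuousOn_rpow_mul_comp ht₀ hf hu hu_pos).mono Icc_subset_Ici_self).intervalIntegrable_of_Icc
    ht

theorem continuousOn_primitive_Ici (hg : ∀ t, t₀ ≤ t → IntervalIntegrable g volume t₀ t) :
    ContinuousOn (fun t => ∫ s in t₀..t, g s) (Ici t₀) := by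
  intro t ht
  have ht' : t₀ ≤ t + 1 := (mem_Ici.1 ht).trans (le_add_of_nonneg_right zero_le_one)
  have hint : IntervalIntegrable g volume (min t₀ t₀) (max t₀ (t + 1)) := by
    rw [min_self, max_eq_right ht']
    exact hg _ ht'
  refine (continuousWithinAt_primitive (measure_singleton t) hint).mono_of_mem_nhdsWithin ?_
  rw [← Ici_inter_Iic]
  exact inter_mem_nhdsWithin _ (Iic_mem_nhds (lt_add_one t))

theorem continuousOn_volterraMap (ht₀ : 0 < t₀)
    (hint : ∀ t, t₀ ≤ t → IntervalIntegrable (fun s => s ^ p * f (u s)) volume t₀ t) :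
    ContinuousOn (volterraMap t₀ κ p f u) (Ici t₀) :=
  (continuousOn_const.mul (continuousOn_id.rpow_const fun _ hs => Or.inl (ht₀.trans_le hs).ne')).mul
    (continuousOn_const.add (continuousOn_primitive_Ici hint))

theorem mul_rpow_neg_le_volterraMap (ht₀ : 0 < t₀) (hκ : 0 ≤ κ) (hf : MapsTo f (Ioi 0) (Ici 0))
    (hu : MapsTo u (Ici t₀) (Ioi 0)) (ht : t₀ ≤ t) : κ * t ^ (-p) ≤ volterraMap t₀ κ p f u t := by
  have hI : 0 ≤ ∫ s in t₀..t, s ^ p * f (u s) :=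
    integral_nonneg ht fun s hs => mul_nonneg (rpow_nonneg (ht₀.le.trans hs.1) p) (hf (hu hs.1))
  exact le_mul_of_one_le_right (mul_nonneg hκ (rpow_nonneg (ht₀.le.trans ht) _))
    (le_add_of_nonneg_right hI)

theorem volterraMap_le_volterraMap (ht₀ : 0 < t₀) (hκ : 0 ≤ κ) (hf_cont : ContinuousOn f (Ioi 0))
    (hf_mono : MonotoneOn f (Ioi 0)) (hu : ContinuousOn u (Ici t₀)) (hv : ContinuousOn v (Ici t₀))
    (hu_pos : MapsTo u (Ici t₀) (Ioi 0)) (huv : ∀ s, t₀ ≤ s → u s ≤ v s) (ht : t₀ ≤ t) :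
    volterraMap t₀ κ p f u t ≤ volterraMap t₀ κ p f v t := by
  have hv_pos : MapsTo v (Ici t₀) (Ioi 0) := fun s hs => (hu_pos hs).trans_le (huv s hs)
  have hI : ∫ s in t₀..t, s ^ p * f (u s) ≤ ∫ s in t₀..t, s ^ p * f (v s) :=
    integral_mono_on ht (intervalIntegrable_rpow_mul_comp ht₀ hf_cont hu hu_pos ht)
      (intervalIntegrable_rpow_mul_comp ht₀ hf_cont hv hv_pos ht) fun s hs =>
        mul_le_mul_of_nonneg_left (hf_mono (hu_pos hs.1) (hv_pos hs.1) (huv s hs.1))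
          (rpow_nonneg (ht₀.le.trans hs.1) p)
  exact mul_le_mul_of_nonneg_left (add_le_add le_rfl hI)
    (mul_nonneg hκ (rpow_nonneg (ht₀.le.trans ht) _))

structure IsSupersolution (t₀ κ p : ℝ) (f u : ℝ → ℝ) : Prop where
  continuousOn : ContinuousOn u (Ici t₀)
  mapsTo : MapsTo u (Ici t₀) (Ioi 0)
  volterraMap_le : ∀ t, t₀ ≤ t → volterraMap t₀ κ p f u t ≤ u t

theorem IsSupersolution.map (ht₀ : 0 < t₀) (hκ : 0 < κ) (hf_cont : ContinuousOn f (Ioi 0))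
    (hf_mono : MonotoneOn f (Ioi 0)) (hf_nonneg : MapsTo f (Ioi 0) (Ici 0))
    (hu : IsSupersolution t₀ κ p f u) : IsSupersolution t₀ κ p f (volterraMap t₀ κ p f u) := by
  have hcont : ContinuousOn (volterraMap t₀ κ p f u) (Ici t₀) :=
    continuousOn_volterraMap ht₀ fun _ =>
      intervalIntegrable_rpow_mul_comp ht₀ hf_cont hu.continuousOn hu.mapsTo
  have hpos : MapsTo (volterraMap t₀ κ p f u) (Ici t₀) (Ioi 0) := fun t ht =>
    (mul_pos hκ (rpow_pos_of_pos (ht₀.trans_le ht) _)).trans_le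
      (mul_rpow_neg_le_volterraMap ht₀ hκ.le hf_nonneg hu.mapsTo ht)
  exact ⟨hcont, hpos, fun t ht => volterraMap_le_volterraMap ht₀ hκ.le hf_cont hf_mono hcont
    hu.continuousOn hpos hu.volterraMap_le ht⟩

theorem IsSupersolution.iterate (ht₀ : 0 < t₀) (hκ : 0 < κ) (hf_cont : ContinuousOn f (Ioi 0))
    (hf_mono : MonotoneOn f (Ioi 0)) (hf_nonneg : MapsTo f (Ioi 0) (Ici 0))
    (hu : IsSupersolution t₀ κ p f u) (k : ℕ) :
    IsSupersolution t₀ κ p f ((volterraMap t₀ κ p f)^[k] u) := by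
  induction k with
  | zero => exact hu
  | succ k ih =>
    rw [Function.iterate_succ_apply']
    exact ih.map ht₀ hκ hf_cont hf_mono hf_nonneg

noncomputable def volterraInf (t₀ κ p : ℝ) (f z : ℝ → ℝ) (t : ℝ) : ℝ :=
  ⨅ k : ℕ, (volterraMap t₀ κ p f)^[k] z t

theorem antitone_iterate_volterraMap
    (hz : ∀ k, IsSupersolution t₀ κ p f ((volterraMap t₀ κ p f)^[k] z)) (ht : t₀ ≤ t) :
    Antitone fun k => (volterraMap t₀ κ p f)^[k] z t :=
  antitone_nat_of_succ_le fun k => by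
    rw [Function.iterate_succ_apply']
    exact (hz k).volterraMap_le t ht

theorem bddBelow_range_iterate_volterraMap
    (hz : ∀ k, IsSupersolution t₀ κ p f ((volterraMap t₀ κ p f)^[k] z)) (ht : t₀ ≤ t) :
    BddBelow (range fun k => (volterraMap t₀ κ p f)^[k] z t) :=
  ⟨0, by rintro _ ⟨k, rfl⟩; exact ((hz k).mapsTo ht).le⟩

theorem tendsto_iterate_volterraInf
    (hz : ∀ k, IsSupersolution t₀ κ p f ((volterraMap t₀ κ p f)^[k] z)) (ht : t₀ ≤ t) :
    Tendsto (fun k => (volterraMap t₀ κ p f)^[k] z t) atTop (𝓝 (volterraInf t₀ κ p f z t)) :=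
  tendsto_atTop_ciInf (antitone_iterate_volterraMap hz ht)
    (bddBelow_range_iterate_volterraMap hz ht)

theorem volterraInf_mapsTo (ht₀ : 0 < t₀) (hκ : 0 < κ) (hf_nonneg : MapsTo f (Ioi 0) (Ici 0))
    (hz : ∀ k, IsSupersolution t₀ κ p f ((volterraMap t₀ κ p f)^[k] z)) :
    MapsTo (volterraInf t₀ κ p f z) (Ici t₀) (Ioi 0) := fun t ht =>
  (mul_pos hκ (rpow_pos_of_pos (ht₀.trans_le ht) (-p))).trans_le <| le_ciInf fun k =>
    (mul_rpow_neg_le_volterraMap ht₀ hκ.le hf_nonneg (hz k).mapsTo ht).trans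
      ((hz k).volterraMap_le t ht)

theorem tendsto_rpow_mul_iterate (ht₀ : 0 < t₀) (hκ : 0 < κ) (hf_cont : ContinuousOn f (Ioi 0))
    (hf_nonneg : MapsTo f (Ioi 0) (Ici 0))
    (hz : ∀ k, IsSupersolution t₀ κ p f ((volterraMap t₀ κ p f)^[k] z)) (ht : t₀ ≤ t) :
    Tendsto (fun k => t ^ p * f ((volterraMap t₀ κ p f)^[k] z t)) atTop
      (𝓝 (t ^ p * f (volterraInf t₀ κ p f z t))) :=
  ((hf_cont.continuousAt (Ioi_mem_nhds (volterraInf_mapsTo ht₀ hκ hf_nonneg hz ht))).tendsto.comp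
    (tendsto_iterate_volterraInf hz ht)).const_mul _

theorem norm_rpow_mul_iterate_le (ht₀ : 0 < t₀) (hf_mono : MonotoneOn f (Ioi 0))
    (hf_nonneg : MapsTo f (Ioi 0) (Ici 0))
    (hz : ∀ k, IsSupersolution t₀ κ p f ((volterraMap t₀ κ p f)^[k] z)) (ht : t₀ ≤ t) (k : ℕ) :
    ‖t ^ p * f ((volterraMap t₀ κ p f)^[k] z t)‖ ≤ t ^ p * f (z t) := by
  have hpos := (hz k).mapsTo ht
  rw [Real.norm_of_nonneg (mul_nonneg (rpow_nonneg (ht₀.le.trans ht) p) (hf_nonneg hpos))]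
  exact mul_le_mul_of_nonneg_left
    (hf_mono hpos ((hz 0).mapsTo ht) (antitone_iterate_volterraMap hz ht k.zero_le))
    (rpow_nonneg (ht₀.le.trans ht) p)

theorem intervalIntegrable_rpow_mul_volterraInf (ht₀ : 0 < t₀) (hκ : 0 < κ)
    (hf_cont : ContinuousOn f (Ioi 0)) (hf_mono : MonotoneOn f (Ioi 0))
    (hf_nonneg : MapsTo f (Ioi 0) (Ici 0))
    (hz : ∀ k, IsSupersolution t₀ κ p f ((volterraMap t₀ κ p f)^[k] z)) (ht : t₀ ≤ t) :
    IntervalIntegrable (fun s => s ^ p * f (volterraInf t₀ κ p f z s)) volume t₀ t := by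
  have hsub : uIoc t₀ t ⊆ Ici t₀ := fun s hs => ((uIoc_of_le ht ▸ hs).1).le
  have hmeas : AEStronglyMeasurable (fun s => s ^ p * f (volterraInf t₀ κ p f z s))
      (volume.restrict (uIoc t₀ t)) :=
    aestronglyMeasurable_of_tendsto_ae atTop
      (fun k => ((continuousOn_rpow_mul_comp ht₀ hf_cont (hz k).continuousOn
        (hz k).mapsTo).mono hsub).aestronglyMeasurable measurableSet_uIoc)
      ((ae_restrict_iff' measurableSet_uIoc).2 <| ae_of_all _ fun s hs =>
        tendsto_rpow_mul_iterate ht₀ hκ hf_cont hf_nonneg hz (hsub hs))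
  refine (intervalIntegrable_rpow_mul_comp (p := p) ht₀ hf_cont (hz 0).continuousOn (hz 0).mapsTo
    ht).mono_fun' hmeas ((ae_restrict_iff' measurableSet_uIoc).2 <| ae_of_all _ fun s hs => ?_)
  exact le_of_tendsto (tendsto_rpow_mul_iterate ht₀ hκ hf_cont hf_nonneg hz (hsub hs)).norm
    (Eventually.of_forall (norm_rpow_mul_iterate_le ht₀ hf_mono hf_nonneg hz (hsub hs)))

theorem volterraMap_volterraInf (ht₀ : 0 < t₀) (hκ : 0 < κ)
    (hf_cont : ContinuousOn f (Ioi 0)) (hf_mono : MonotoneOn f (Ioi 0))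
    (hf_nonneg : MapsTo f (Ioi 0) (Ici 0))
    (hz : ∀ k, IsSupersolution t₀ κ p f ((volterraMap t₀ κ p f)^[k] z)) (ht : t₀ ≤ t) :
    volterraMap t₀ κ p f (volterraInf t₀ κ p f z) t = volterraInf t₀ κ p f z t := by
  have hsub : uIoc t₀ t ⊆ Ici t₀ := fun s hs => ((uIoc_of_le ht ▸ hs).1).le
  have hI : Tendsto (fun k => ∫ s in t₀..t, s ^ p * f ((volterraMap t₀ κ p f)^[k] z s)) atTop
      (𝓝 (∫ s in t₀..t, s ^ p * f (volterraInf t₀ κ p f z s))) :=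
    tendsto_integral_filter_of_dominated_convergence _
      (Eventually.of_forall fun k => ((continuousOn_rpow_mul_comp ht₀ hf_cont (hz k).continuousOn
        (hz k).mapsTo).mono hsub).aestronglyMeasurable measurableSet_uIoc)
      (Eventually.of_forall fun k => ae_of_all _ fun s hs =>
        norm_rpow_mul_iterate_le ht₀ hf_mono hf_nonneg hz (hsub hs) k)
      (intervalIntegrable_rpow_mul_comp (p := p) ht₀ hf_cont (hz 0).continuousOn (hz 0).mapsTo ht)
      (ae_of_all _ fun s hs => tendsto_rpow_mul_iterate ht₀ hκ hf_cont hf_nonneg hz (hsub hs))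
  have hsucc : Tendsto (fun k => volterraMap t₀ κ p f ((volterraMap t₀ κ p f)^[k] z) t) atTop
      (𝓝 (volterraInf t₀ κ p f z t)) := by
    simpa only [Function.comp_def, Function.iterate_succ_apply'] using
      (tendsto_iterate_volterraInf hz ht).comp (tendsto_add_atTop_nat 1)
  exact tendsto_nhds_unique ((hI.const_add 1).const_mul _) hsucc

theorem IsSupersolution.exists_eqOn_volterraMap (ht₀ : 0 < t₀) (hκ : 0 < κ)
    (hf_cont : ContinuousOn f (Ioi 0)) (hf_mono : MonotoneOn f (Ioi 0))
    (hf_nonneg : MapsTo f (Ioi 0) (Ici 0)) (hz : IsSupersolution t₀ κ p f z) :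
    ∃ x, ContinuousOn x (Ici t₀) ∧ MapsTo x (Ici t₀) (Ioi 0) ∧
      EqOn (volterraMap t₀ κ p f x) x (Ici t₀) := by
  have hz := hz.iterate ht₀ hκ hf_cont hf_mono hf_nonneg
  have hfix : EqOn (volterraMap t₀ κ p f (volterraInf t₀ κ p f z)) (volterraInf t₀ κ p f z)
      (Ici t₀) := fun t ht => volterraMap_volterraInf ht₀ hκ hf_cont hf_mono hf_nonneg hz ht
  refine ⟨_, ?_, volterraInf_mapsTo ht₀ hκ hf_nonneg hz, hfix⟩
  exact (continuousOn_volterraMap ht₀ fun t ht =>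
    intervalIntegrable_rpow_mul_volterraInf ht₀ hκ hf_cont hf_mono hf_nonneg hz ht).congr hfix.symm

theorem hasDerivAt_of_eqOn_volterraMap (ht₀ : 0 < t₀) (hf_cont : ContinuousOn f (Ioi 0))
    (hx : ContinuousOn x (Ici t₀)) (hx_pos : MapsTo x (Ici t₀) (Ioi 0))
    (hfix : EqOn (volterraMap t₀ κ p f x) x (Ici t₀)) (ht : t₀ < t) :
    HasDerivAt x (κ * f (x t) - p / t * x t) t := by
  have ht0 : 0 < t := ht₀.trans ht
  have hg := continuousOn_rpow_mul_comp (p := p) ht₀ hf_cont hx hx_pos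
  have hG : HasDerivAt (fun r => ∫ s in t₀..r, s ^ p * f (x s)) (t ^ p * f (x t)) t :=
    integral_hasDerivAt_right (intervalIntegrable_rpow_mul_comp ht₀ hf_cont hx hx_pos ht.le)
      ((hg.mono Ioi_subset_Ici_self).stronglyMeasurableAtFilter isOpen_Ioi t ht)
      (hg.continuousAt (Ici_mem_nhds ht))
  have hT := ((hasDerivAt_rpow_const (p := -p) (Or.inl ht0.ne')).const_mul κ).mul
    (hG.const_add 1)
  have hxt : κ * t ^ (-p) * (1 + ∫ s in t₀..t, s ^ p * f (x s)) = x t := hfix ht.le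
  have hderiv : κ * (-p * t ^ (-p - 1)) * (1 + ∫ s in t₀..t, s ^ p * f (x s)) +
      κ * t ^ (-p) * (t ^ p * f (x t)) = κ * f (x t) - p / t * x t := by
    rw [rpow_sub_one ht0.ne', ← hxt, rpow_neg ht0.le]
    field_simp
    ring
  rw [← hderiv]
  exact hT.congr_of_eventuallyEq <|
    eventually_of_mem (Ioi_mem_nhds ht) fun r hr => (hfix (mem_Ioi.1 hr).le).symm

theorem hasDerivAt_comp_div_const {F : ℝ → ℝ} {τ : ℝ} (hκ : κ ≠ 0)
    (hx : ∀ t, t₀ < t → HasDerivAt x (κ * F (x t) - p / t * x t) t) (hτ : t₀ < τ / κ) :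
    HasDerivAt (fun τ => x (τ / κ)) (F (x (τ / κ)) - p / τ * x (τ / κ)) τ := by
  refine ((hx _ hτ).comp τ ((hasDerivAt_id' τ).div_const κ)).congr_deriv ?_
  rw [div_div_eq_mul_div]
  field_simp

theorem stmt19_general (n α t₀ κ : ℝ) (f : ℝ → ℝ) (z : ℝ → ℝ)
    (ht₀ : 0 < t₀) (hκ : 0 < κ)
    (hlip : LocallyLipschitzOn (Ioi (0 : ℝ)) f)
    (hmono : ∀ u v : ℝ, 0 < u → u ≤ v → f u ≤ f v)
    (hfpos : ∀ u : ℝ, 0 < u → 0 < f u)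
    (hblow : ∀ t₁ x₀ : ℝ, 0 < t₁ → 0 < x₀ →
      ∀ x : ℝ → ℝ, x t₁ = x₀ → (∀ t : ℝ, t₁ ≤ t → 0 < x t) →
        (∀ t : ℝ, t₁ ≤ t → HasDerivAt x (f (x t) - n / (α * t) * x t) t) → False)
    (hz_cont : ContinuousOn z (Ici t₀))
    (hz_pos : ∀ t : ℝ, t₀ ≤ t → 0 < z t)
    (hz_ineq : ∀ t : ℝ, t₀ ≤ t →
      κ * t ^ (-(n / α)) + κ * ∫ s in t₀..t, (t / s) ^ (-(n / α)) * f (z s) ≤ z t) :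
    False := by
  have hf_cont := hlip.continuousOn
  have hf_mono : MonotoneOn f (Ioi 0) := fun u hu v _ huv => hmono u v hu huv
  have hf_nonneg : MapsTo f (Ioi 0) (Ici 0) := fun u hu => (hfpos u hu).le
  have hz : IsSupersolution t₀ κ (n / α) f z :=
    ⟨hz_cont, fun t ht => hz_pos t ht,
      fun t ht => (volterraMap_eq_add_integral ht₀ ht).trans_le (hz_ineq t ht)⟩
  obtain ⟨x, hx_cont, hx_pos, hfix⟩ := hz.exists_eqOn_volterraMap ht₀ hκ hf_cont hf_mono hf_nonneg
  have ht₀_lt : ∀ τ, κ * (t₀ + 1) ≤ τ → t₀ < τ / κ := fun τ hτ => by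
    rw [lt_div_iff₀ hκ]
    linarith
  refine hblow _ _ (by positivity) (hx_pos (ht₀_lt _ le_rfl).le) (fun τ => x (τ / κ)) rfl
    (fun τ hτ => hx_pos (ht₀_lt τ hτ).le) fun τ hτ => ?_
  rw [← div_div]
  exact hasDerivAt_comp_div_const hκ.ne'
    (fun t ht => hasDerivAt_of_eqOn_volterraMap ht₀ hf_cont hx_cont hx_pos hfix ht) (ht₀_lt τ hτ)

/-- if every positive solution of the ODE `x' = f(x) − (n/(α t)) x`
(with positive initial data at positive initial time) blows up in finite time, i.e. no
such solution is globally defined, then there is no continuous positive `z` on `[t₀,∞)`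
satisfying the integral inequality
`z(t) ≥ κ t^{−n/α} + κ ∫_{t₀}^t (t/s)^{−n/α} f(z(s)) ds`. -/
theorem stmt19 (n α t₀ κ : ℝ) (f : ℝ → ℝ) (z : ℝ → ℝ)
    (hn : 1 ≤ n) (hα : 0 < α) (ht₀ : 0 < t₀) (hκ : 0 < κ)
    (hlip : LocallyLipschitzOn (Ioi (0 : ℝ)) f)
    (hmono : ∀ u v : ℝ, 0 < u → u ≤ v → f u ≤ f v)
    (hfpos : ∀ u : ℝ, 0 < u → 0 < f u)
    (hblow : ∀ t₁ x₀ : ℝ, 0 < t₁ → 0 < x₀ →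
      ∀ x : ℝ → ℝ, x t₁ = x₀ → (∀ t : ℝ, t₁ ≤ t → 0 < x t) →
        (∀ t : ℝ, t₁ ≤ t → HasDerivAt x (f (x t) - n / (α * t) * x t) t) → False)
    (hz_cont : ContinuousOn z (Ici t₀))
    (hz_pos : ∀ t : ℝ, t₀ ≤ t → 0 < z t)
    (hz_ineq : ∀ t : ℝ, t₀ ≤ t →
      κ * t ^ (-(n / α)) + κ * ∫ s in t₀..t, (t / s) ^ (-(n / α)) * f (z s) ≤ z t) :
    False :=
  stmt19_general n α t₀ κ f z ht₀ hκ hlip hmono hfpos hblow hz_cont hz_pos hz_ineq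
end
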